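/- arXiv:2401.10432 — 3 statements merged into one kernel-verified Lean document; each statement's English description precedes it below -/
import Mathlib

section
/- Let x be a K-dimensional vector of integers with each x_i ∈ [c, d] where d - c = 2^N - 1, and let q be a K-dimensional integer vector with Σ_i q_i = 0. If ‖q‖₁ ≤ (2^P - 2)/(2^N - 1), then -2^(P-1) ≤ xᵀq ≤ 2^(P-1) - 1, i.e., the dot product can be accumulated in a signed P-bit two's complement register without overflow. -/
open Finset

lemma two_mul_max_eq (a : ℤ) : 2 * max a 0 = a + |a| := by
  rcases le_total a 0 with h | h
  · simp [max_eq_right h, abs_of_nonpos h]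
  · simp [max_eq_left h, abs_of_nonneg h]; ring

theorem a2q_plus_no_overflow {K N P : ℕ} (hN : 1 ≤ N) (hP : 1 ≤ P)
    (c d : ℤ) (hcd : d - c = 2 ^ N - 1)
    (x q : Fin K → ℤ)
    (hx : ∀ i, c ≤ x i ∧ x i ≤ d)
    (hq0 : ∑ i, q i = 0)
    (hq1 : ((∑ i, |q i| : ℤ) : ℝ) ≤ ((2 : ℝ) ^ P - 2) / ((2 : ℝ) ^ N - 1)) :
    -2 ^ (P - 1) ≤ ∑ i, x i * q i ∧ ∑ i, x i * q i ≤ 2 ^ (P - 1) - 1 := by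
  have hM : (1 : ℤ) ≤ 2 ^ N - 1 := by
    have : (2 : ℤ) ^ 1 ≤ 2 ^ N := pow_le_pow_right₀ (by norm_num) hN
    simpa using by linarith
  -- cast hq1 to ℤ
  have hNR : (0 : ℝ) < (2 : ℝ) ^ N - 1 := by
    have : ((1 : ℤ) : ℝ) ≤ ((2 ^ N - 1 : ℤ) : ℝ) := by exact_mod_cast hM
    push_cast at this; linarith
  have hZR : ((∑ i, |q i| : ℤ) : ℝ) * ((2 : ℝ) ^ N - 1) ≤ (2 : ℝ) ^ P - 2 :=
    (le_div_iff₀ hNR).mp hq1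
  have hZ : (∑ i, |q i|) * (2 ^ N - 1) ≤ 2 ^ P - 2 := by
    exact_mod_cast (by push_cast at hZR ⊢; linarith : ((∑ i, |q i| : ℤ) : ℝ) * (((2:ℤ)^N - 1 : ℤ) : ℝ) ≤ (((2:ℤ)^P - 2 : ℤ) : ℝ))
  set T : ℤ := ∑ i, max (q i) 0 with hT
  have h2T : 2 * T = ∑ i, |q i| := by
    rw [hT, Finset.mul_sum]
    rw [show (∑ i, |q i|) = ∑ i, (q i + |q i|) - ∑ i, q i by
      rw [Finset.sum_add_distrib]; ring]
    rw [hq0, sub_zero]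
    exact Finset.sum_congr rfl fun i _ => two_mul_max_eq (q i)
  have hPow : (2 : ℤ) ^ P = 2 * 2 ^ (P - 1) := by
    conv_lhs => rw [show P = P - 1 + 1 by omega]
    ring
  have hTb : (2 ^ N - 1) * T ≤ 2 ^ (P - 1) - 1 := by
    have : 2 * ((2 ^ N - 1) * T) ≤ 2 * (2 ^ (P - 1) - 1) := by
      calc 2 * ((2 ^ N - 1) * T) = (2 * T) * (2 ^ N - 1) := by ring
        _ = (∑ i, |q i|) * (2 ^ N - 1) := by rw [h2T]
        _ ≤ 2 ^ P - 2 := hZ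
        _ = 2 * (2 ^ (P - 1) - 1) := by rw [hPow]; ring
    linarith
  have hsum : ∑ i, x i * q i = ∑ i, (x i - c) * q i := by
    simp only [sub_mul, Finset.sum_sub_distrib, ← Finset.mul_sum, hq0, mul_zero, sub_zero]
  constructor
  · -- lower bound
    have hlow : ∑ i, (2 ^ N - 1) * min (q i) 0 ≤ ∑ i, (x i - c) * q i := by
      apply Finset.sum_le_sum
      intro i _
      rcases le_total 0 (q i) with h | h
      · rw [min_eq_right h]
        have : (0:ℤ) ≤ (x i - c) * q i :=
          mul_nonneg (by linarith [(hx i).1]) h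
        linarith
      · rw [min_eq_left h]
        have hx' : x i - c ≤ 2 ^ N - 1 := by linarith [(hx i).2, hcd.symm.le]
        exact mul_le_mul_of_nonpos_right hx' h
    have hmin : ∑ i, (2 ^ N - 1) * min (q i) 0 = -((2 ^ N - 1) * T) := by
      rw [← Finset.mul_sum, hT]
      have key : (∑ i, min (q i) 0) + ∑ i, max (q i) 0 = 0 := by
        rw [← Finset.sum_add_distrib]
        simp only [min_add_max, add_zero]
        exact hq0
      have : (∑ i, min (q i) 0) = -∑ i, max (q i) 0 := by linarith
      rw [this, mul_neg]
    rw [hsum]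
    calc (-2 ^ (P-1) : ℤ) ≤ -((2 ^ N - 1) * T) := by linarith
      _ = ∑ i, (2 ^ N - 1) * min (q i) 0 := hmin.symm
      _ ≤ _ := hlow
  · -- upper bound
    have hup : ∑ i, (x i - c) * q i ≤ ∑ i, (2 ^ N - 1) * max (q i) 0 := by
      apply Finset.sum_le_sum
      intro i _
      rcases le_total 0 (q i) with h | h
      · rw [max_eq_left h]
        have hx' : x i - c ≤ 2 ^ N - 1 := by linarith [(hx i).2, hcd.symm.le]
        exact mul_le_mul_of_nonneg_right hx' h
      · rw [max_eq_right h]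
        have : (x i - c) * q i ≤ 0 :=
          mul_nonpos_of_nonneg_of_nonpos (by linarith [(hx i).1]) h
        linarith
    rw [hsum]
    calc ∑ i, (x i - c) * q i ≤ ∑ i, (2 ^ N - 1) * max (q i) 0 := hup
      _ = (2 ^ N - 1) * T := by rw [← Finset.mul_sum]
      _ ≤ 2 ^ (P - 1) - 1 := hTb
end

section
/- Let w ∈ ℝ^K with ‖w‖₁ > T > 0. There exists θ > 0 such that v* defined coordinatewise by v*_i = sign(w_i)·max(|w_i| - θ, 0) satisfies ‖v*‖₁ = T, and this v* is the Euclidean projection of w onto the ℓ1-ball of radius T (soft-thresholding characterization). -/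
open Finset

theorem soft_threshold_projection {K : ℕ} (w : Fin K → ℝ) (T : ℝ) (hT : 0 < T)
    (hw : T < ∑ i, |w i|) :
    ∃ θ : ℝ, 0 < θ ∧
      (∑ i, |Real.sign (w i) * max (|w i| - θ) 0|) = T ∧
      (∀ u : Fin K → ℝ, (∑ i, |u i|) ≤ T →
        (1 / 2) * ∑ i, (Real.sign (w i) * max (|w i| - θ) 0 - w i) ^ 2 ≤
          (1 / 2) * ∑ i, (u i - w i) ^ 2) := by
  set M := ∑ i, |w i| with hM
  have hMpos : 0 < M := hT.trans hw
  set g : ℝ → ℝ := fun θ => ∑ i, max (|w i| - θ) 0 with hg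
  have hcont : Continuous g :=
    continuous_finset_sum _ fun i _ =>
      (continuous_const.sub continuous_id).max continuous_const
  have hgM : g M = 0 := by
    apply Finset.sum_eq_zero
    intro i _
    have h1 : |w i| ≤ M := Finset.single_le_sum (fun j _ => abs_nonneg (w j)) (mem_univ i)
    exact max_eq_right (by linarith)
  have hg0 : g 0 = M := by
    simp only [hg]
    refine Finset.sum_congr rfl fun i _ => ?_
    rw [sub_zero, max_eq_left (abs_nonneg _)]
  have hmem : T ∈ Set.Icc (g M) (g 0) := by
    rw [hgM, hg0]; exact ⟨hT.le, hw.le⟩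
  obtain ⟨θ, hθmem, hθeq⟩ :=
    intermediate_value_Icc' hMpos.le hcont.continuousOn hmem
  have hθpos : 0 < θ := by
    rcases lt_or_eq_of_le hθmem.1 with h | h
    · exact h
    · exfalso; rw [← h] at hθeq; rw [hg0] at hθeq; linarith
  set v : Fin K → ℝ := fun i => Real.sign (w i) * max (|w i| - θ) 0 with hv
  have habs : ∀ i, |v i| = max (|w i| - θ) 0 := by
    intro i
    rcases le_or_gt (|w i|) θ with h | h
    · have : max (|w i| - θ) 0 = 0 := max_eq_right (by linarith)
      simp [hv, this]
    · have hm : max (|w i| - θ) 0 = |w i| - θ := max_eq_left (by linarith)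
      have hne : w i ≠ 0 := by
        intro h0; rw [h0] at h; simp at h; linarith
      rcases hne.lt_or_gt with hn | hp
      · rw [hv]; simp only [hm, Real.sign_of_neg hn]
        rw [abs_of_neg hn] at h ⊢
        rw [abs_of_nonpos (by nlinarith)]; ring
      · rw [hv]; simp only [hm, Real.sign_of_pos hp]
        rw [abs_of_pos hp] at h ⊢
        rw [abs_of_nonneg (by nlinarith)]; ring
  have hsumv : ∑ i, |v i| = T := by
    rw [Finset.sum_congr rfl fun i _ => habs i]; exact hθeq
  have hvw : ∀ i, |v i - w i| ≤ θ := by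
    intro i
    rcases le_or_gt (|w i|) θ with h | h
    · have : max (|w i| - θ) 0 = 0 := max_eq_right (by linarith)
      simp only [hv, this, mul_zero, zero_sub, abs_neg]
      linarith
    · have hm : max (|w i| - θ) 0 = |w i| - θ := max_eq_left (by linarith)
      have hne : w i ≠ 0 := by
        intro h0; rw [h0] at h; simp at h; linarith
      rcases hne.lt_or_gt with hn | hp
      · simp only [hv, hm, Real.sign_of_neg hn]
        rw [abs_of_neg hn]
        rw [abs_of_nonneg (by nlinarith)]; linarith
      · simp only [hv, hm, Real.sign_of_pos hp]
        rw [abs_of_pos hp]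
        rw [abs_of_nonpos (by nlinarith)]; linarith
  have hb : ∀ i, v i * (v i - w i) = -θ * |v i| := by
    intro i
    rcases le_or_gt (|w i|) θ with h | h
    · have : max (|w i| - θ) 0 = 0 := max_eq_right (by linarith)
      simp [hv, this]
    · have hm : max (|w i| - θ) 0 = |w i| - θ := max_eq_left (by linarith)
      have hne : w i ≠ 0 := by
        intro h0; rw [h0] at h; simp at h; linarith
      rw [habs i, hm]
      rcases hne.lt_or_gt with hn | hp
      · simp only [hv, hm, Real.sign_of_neg hn]
        rw [abs_of_neg hn]; ring
      · simp only [hv, hm, Real.sign_of_pos hp]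
        rw [abs_of_pos hp]; ring
  refine ⟨θ, hθpos, hsumv, ?_⟩
  intro u hu
  have hA : ∑ i, v i * (v i - w i) = -θ * T := by
    rw [Finset.sum_congr rfl fun i _ => hb i, ← Finset.mul_sum, hsumv]
  have hB : -θ * ∑ i, |u i| ≤ ∑ i, u i * (v i - w i) := by
    rw [Finset.mul_sum]
    apply Finset.sum_le_sum
    intro i _
    have h1 : |u i * (v i - w i)| ≤ |u i| * θ := by
      rw [abs_mul]
      exact mul_le_mul_of_nonneg_left (hvw i) (abs_nonneg _)
    have h2 := neg_abs_le (u i * (v i - w i))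
    linarith
  have hid : ∑ i, (u i - w i) ^ 2 =
      ∑ i, (v i - w i) ^ 2 + ∑ i, (u i - v i) ^ 2
        + 2 * (∑ i, u i * (v i - w i) - ∑ i, v i * (v i - w i)) := by
    rw [← Finset.sum_sub_distrib, mul_comm, Finset.sum_mul, ← Finset.sum_add_distrib,
      ← Finset.sum_add_distrib]
    refine Finset.sum_congr rfl fun i _ => ?_
    ring
  have hsq : 0 ≤ ∑ i, (u i - v i) ^ 2 :=
    Finset.sum_nonneg fun i _ => sq_nonneg _
  have hcross : 0 ≤ ∑ i, u i * (v i - w i) - ∑ i, v i * (v i - w i) := by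
    rw [hA]
    nlinarith
  nlinarith [hid, hsq, hcross]
end

section
/- For K ≥ 1, N ≥ 1, M ≥ 1, signed flag σ ∈ {0,1}, and α = log₂(K) + N + M - 1 - σ, the quantity P* = ⌈α + log₂(1 + 2^{-α}) + 1⌉ satisfies 2^α + 1 ≤ 2^{P*-1}, i.e., a signed P*-bit accumulator can represent any dot product of K products of an M-bit signed weight with an N-bit (signed iff σ=1) input without overflow. -/
open Finset

theorem conservative_accumulator_bound (K M N σ : ℕ)
    (hK : 1 ≤ K) (hM : 1 ≤ M) (hN : 1 ≤ N) (hσ : σ ≤ 1) :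
    ∀ α P : ℝ, α = Real.logb 2 K + N + M - 1 - σ →
      P = ⌈α + Real.logb 2 (1 + 2 ^ (-α)) + 1⌉ →
      (2 : ℝ) ^ α + 1 ≤ 2 ^ (P - 1) ∧
      ∀ w x : Fin K → ℤ,
        (∀ i, |w i| ≤ 2 ^ (M - 1)) →
        (∀ i, |x i| ≤ 2 ^ (N - σ)) →
        -(2 : ℝ) ^ (P - 1) ≤ ((∑ i, x i * w i : ℤ) : ℝ) ∧
          ((∑ i, x i * w i : ℤ) : ℝ) ≤ 2 ^ (P - 1) - 1 := by
  intro α P hα hP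
  have hKpos : (0:ℝ) < K := by exact_mod_cast hK
  have hpow : (2:ℝ) ^ α = K * 2 ^ ((N:ℝ) + M - 1 - σ) := by
    rw [hα, show Real.logb 2 K + N + M - 1 - σ
        = Real.logb 2 K + ((N:ℝ) + M - 1 - σ) by ring,
      Real.rpow_add (by norm_num), Real.rpow_logb (by norm_num) (by norm_num) hKpos]
  have hmul : (2:ℝ)^α * (1 + 2^(-α)) = 2 ^ α + 1 := by
    rw [mul_add, mul_one, ← Real.rpow_add (by norm_num)]
    simp
  have hlog : α + Real.logb 2 (1 + 2 ^ (-α)) = Real.logb 2 (2 ^ α + 1) := by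
    rw [← hmul, Real.logb_mul (by positivity) (by positivity),
      Real.logb_rpow (by norm_num) (by norm_num)]
  have h1 : (2:ℝ) ^ α + 1 ≤ 2 ^ (P - 1) := by
    have hle : Real.logb 2 (2 ^ α + 1) ≤ P - 1 := by
      have := Int.le_ceil (α + Real.logb 2 (1 + 2 ^ (-α)) + 1)
      rw [← hP] at this
      linarith [hlog ▸ this]
    calc (2:ℝ) ^ α + 1 = 2 ^ Real.logb 2 (2 ^ α + 1) := by
          rw [Real.rpow_logb (by norm_num) (by norm_num) (by positivity)]
      _ ≤ 2 ^ (P - 1) := Real.rpow_le_rpow_left_iff (by norm_num) |>.mpr hle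
  refine ⟨h1, fun w x hw hx => ?_⟩
  have hsum : |(∑ i, x i * w i : ℤ)| ≤ (K : ℤ) * (2^(N-σ) * 2^(M-1)) := by
    calc |(∑ i, x i * w i : ℤ)| ≤ ∑ i, |x i * w i| := abs_sum_le_sum_abs _ _
      _ ≤ ∑ _i : Fin K, ((2:ℤ)^(N-σ) * 2^(M-1)) := by
          refine sum_le_sum fun i _ => ?_
          rw [abs_mul]
          exact mul_le_mul (hx i) (hw i) (abs_nonneg _) (by positivity)
      _ = (K : ℤ) * (2^(N-σ) * 2^(M-1)) := by simp [mul_comm]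
  have hcast : (((K : ℤ) * (2^(N-σ) * 2^(M-1)) : ℤ) : ℝ) = 2 ^ α := by
    rw [hpow]
    push_cast
    rw [← Real.rpow_natCast 2 (N-σ), ← Real.rpow_natCast 2 (M-1),
      ← Real.rpow_add (by norm_num)]
    congr 1
    have h1' : ((N - σ : ℕ):ℝ) = (N:ℝ) - σ := by
      rw [Nat.cast_sub (le_trans hσ hN)]
    have h2' : ((M - 1 : ℕ):ℝ) = (M:ℝ) - 1 := by
      rw [Nat.cast_sub hM]; norm_num
    rw [h1', h2']; ring
  have habs : |((∑ i, x i * w i : ℤ) : ℝ)| ≤ 2 ^ α := by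
    rw [← hcast, ← Int.cast_abs]
    exact_mod_cast hsum
  rw [abs_le] at habs
  constructor
  · linarith [habs.1]
  · linarith [habs.2]
end
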